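/- arXiv:2501.17990 — 2 statements merged into one kernel-verified Lean document; each statement's English description precedes it below -/
import Mathlib

section
/- (Conservation of helicity for the barotropic compressible Euler equations.) Let u : ℝ × ℝ³ → ℝ³, ρ : ℝ × ℝ³ → ℝ be smooth with ρ > 0 everywhere, let p : ℝ → ℝ be a smooth function (the barotropic pressure law), and suppose ρ(∂ₜu + (u·∇)u) = −∇(p∘ρ) and ∂ₜρ + u·∇ρ + ρ div u = 0. Define Π(r) = ∫_{r₀}^{r} η⁻¹ p'(η) dη for some fixed r₀ > 0. Then the helicity density h = u·ω, with ω = curl u, satisfies the pointwise conservation law ∂ₜh + div( h u + (Π∘ρ − ½|u|²) ω ) = 0. -/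
open MeasureTheory

noncomputable section

/-- Physical space `ℝ³`. -/
abbrev Space : Type := Fin 3 → ℝ

/-- Time-space points `ℝ × ℝ³`. -/
abbrev Pt : Type := ℝ × Space

/-- Time partial derivative `∂ₜ f`. -/
def tder (f : Pt → ℝ) (x : Pt) : ℝ := fderiv ℝ f x (1, 0)

/-- Spatial partial derivative `∂ᵢ f` in the `i`-th coordinate direction. -/
def pder (i : Fin 3) (f : Pt → ℝ) (x : Pt) : ℝ := fderiv ℝ f x (0, Pi.single i 1)

/-- Spatial gradient `∇f`. -/
def sgrad (f : Pt → ℝ) (x : Pt) : Space := fun i => pder i f x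

/-- Spatial divergence `div v`. -/
def sdiv (v : Pt → Space) (x : Pt) : ℝ := ∑ i, pder i (fun y => v y i) x

/-- Spatial curl `curl v`. -/
def scurl (v : Pt → Space) (x : Pt) : Space :=
  ![pder 1 (fun y => v y 2) x - pder 2 (fun y => v y 1) x,
    pder 2 (fun y => v y 0) x - pder 0 (fun y => v y 2) x,
    pder 0 (fun y => v y 1) x - pder 1 (fun y => v y 0) x]

/-- Euclidean dot product on `ℝ³`. -/
def dot3 (a b : Space) : ℝ := ∑ i, a i * b i

/-- Cross product on `ℝ³`. -/
def cross3 (a b : Space) : Space :=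
  ![a 1 * b 2 - a 2 * b 1, a 2 * b 0 - a 0 * b 2, a 0 * b 1 - a 1 * b 0]

/-- Componentwise time derivative of a vector field. -/
def tderV (v : Pt → Space) (x : Pt) : Space := fun i => tder (fun y => v y i) x

/-- Advective derivative `(u · ∇) v`. -/
def adv (u v : Pt → Space) (x : Pt) : Space :=
  fun i => dot3 (u x) (sgrad (fun y => v y i) x)

/-- `L`-periodicity in each spatial variable (scalar fields). -/
def SPeriodic (L : ℝ) (f : Pt → ℝ) : Prop :=
  ∀ (x : Pt) (i : Fin 3), f (x.1, x.2 + L • (Pi.single i 1 : Space)) = f x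

/-- `L`-periodicity in each spatial variable (vector fields). -/
def SPeriodicV (L : ℝ) (v : Pt → Space) : Prop :=
  ∀ (x : Pt) (i : Fin 3), v (x.1, x.2 + L • (Pi.single i 1 : Space)) = v x

/-- The periodic cell `[0,L]³`. -/
def box (L : ℝ) : Set Space := Set.Icc 0 (fun _ => L)

def vt : Pt := (1, 0)
def vs (i : Fin 3) : Pt := (0, Pi.single i 1)
def Dd (v : Pt) (f : Pt → ℝ) (x : Pt) : ℝ := fderiv ℝ f x v

lemma tder_eq (f : Pt → ℝ) (x : Pt) : tder f x = Dd vt f x := rfl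
lemma pder_eq (i : Fin 3) (f : Pt → ℝ) (x : Pt) : pder i f x = Dd (vs i) f x := rfl

lemma Dd_contDiff {f : Pt → ℝ} (hf : ContDiff ℝ (⊤ : ℕ∞) f) (v : Pt) : ContDiff ℝ (⊤ : ℕ∞) (Dd v f) := by
  have h1 : ContDiff ℝ (⊤ : ℕ∞) (fderiv ℝ f) := hf.fderiv_right (by simp)
  exact (ContinuousLinearMap.apply ℝ ℝ v).contDiff.comp h1

lemma Dd_comm {f : Pt → ℝ} (hf : ContDiff ℝ (⊤ : ℕ∞) f) (v w : Pt) (x : Pt) :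
    Dd v (Dd w f) x = Dd w (Dd v f) x := by
  have hsym : IsSymmSndFDerivAt ℝ f x := by
    apply ContDiffAt.isSymmSndFDerivAt (n := 2) _ (by simp [minSmoothness_of_isRCLikeNormedField])
    exact hf.contDiffAt.of_le (WithTop.coe_le_coe.mpr le_top)
  have key : ∀ a b : Pt, Dd a (Dd b f) x = fderiv ℝ (fderiv ℝ f) x a b := by
    intro a b
    have hd : DifferentiableAt ℝ (fderiv ℝ f) x :=
      (hf.fderiv_right (m := 1) (WithTop.coe_le_coe.mpr le_top)).differentiable (by norm_num) x
    rw [Dd, show (Dd b f) = (ContinuousLinearMap.apply ℝ ℝ b) ∘ (fderiv ℝ f) from rfl,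
      fderiv_comp x (ContinuousLinearMap.apply ℝ ℝ b).differentiableAt hd]
    simp
  rw [key, key, hsym.eq]

lemma Dd_fun_add {f g : Pt → ℝ} {x v : Pt} (hf : DifferentiableAt ℝ f x)
    (hg : DifferentiableAt ℝ g x) :
    Dd v (fun y => f y + g y) x = Dd v f x + Dd v g x := by
  simp [Dd, fderiv_fun_add hf hg]

lemma Dd_fun_sub {f g : Pt → ℝ} {x v : Pt} (hf : DifferentiableAt ℝ f x)
    (hg : DifferentiableAt ℝ g x) :
    Dd v (fun y => f y - g y) x = Dd v f x - Dd v g x := by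
  simp [Dd, fderiv_fun_sub hf hg]

lemma Dd_fun_mul {f g : Pt → ℝ} {x v : Pt} (hf : DifferentiableAt ℝ f x)
    (hg : DifferentiableAt ℝ g x) :
    Dd v (fun y => f y * g y) x = f x * Dd v g x + g x * Dd v f x := by
  simp [Dd, fderiv_fun_mul hf hg]

lemma Dd_fun_neg {f : Pt → ℝ} {x v : Pt} :
    Dd v (fun y => -f y) x = -Dd v f x := by
  simp [Dd, fderiv_neg]

lemma Dd_fun_const_mul {f : Pt → ℝ} {x v : Pt} (c : ℝ) (hf : DifferentiableAt ℝ f x) :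
    Dd v (fun y => c * f y) x = c * Dd v f x := by
  simp [Dd, fderiv_const_mul hf c]

lemma Dd_comp1 {f : Pt → ℝ} {q : ℝ → ℝ} {q' : ℝ} {x v : Pt}
    (hq : HasDerivAt q q' (f x)) (hf : DifferentiableAt ℝ f x) :
    Dd v (fun y => q (f y)) x = q' * Dd v f x := by
  have h2 : HasFDerivAt (fun y => q (f y)) (q' • fderiv ℝ f x) x :=
    (hq.comp_hasFDerivAt x hf.hasFDerivAt)
  rw [Dd, h2.fderiv]
  simp [Dd, mul_comm]

lemma Dd_fun_const {x v : Pt} (c : ℝ) : Dd v (fun _ => c) x = 0 := by simp [Dd]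


/-- pointwise helicity conservation law for the barotropic
compressible Euler equations:
`∂ₜh + div(h u + (Π∘ρ − ½|u|²) ω) = 0`, with `Π(r) = ∫_{r₀}^r η⁻¹ p'(η) dη`. -/
theorem barotropic_helicity_conservation_pointwise
    (u : Pt → Space) (ρ : Pt → ℝ) (pbar : ℝ → ℝ) (r₀ : ℝ) (hr₀ : 0 < r₀)
    (hu : ContDiff ℝ (⊤ : ℕ∞) u) (hρ : ContDiff ℝ (⊤ : ℕ∞) ρ) (hp : ContDiff ℝ (⊤ : ℕ∞) pbar)
    (hρpos : ∀ x : Pt, 0 < ρ x)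
    (hmom : ∀ x : Pt, ρ x • (tderV u x + adv u u x) = -sgrad (fun y => pbar (ρ y)) x)
    (hmass : ∀ x : Pt, tder ρ x + dot3 (u x) (sgrad ρ x) + ρ x * sdiv u x = 0)
    (x : Pt) :
    tder (fun y => dot3 (u y) (scurl u y)) x
      + sdiv (fun y => dot3 (u y) (scurl u y) • u y
          + ((∫ η in r₀..(ρ y), η⁻¹ * deriv pbar η)
              - (1/2) * dot3 (u y) (u y)) • scurl u y) x
      = 0 := by
  set g : Pt → ℝ := fun y => ∫ η in r₀..(ρ y), η⁻¹ * deriv pbar η with hgdef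
  have hgy : ∀ y : Pt, (∫ η in r₀..(ρ y), η⁻¹ * deriv pbar η) = g y := fun y => rfl
  -- smoothness of components
  have hui : ∀ i : Fin 3, ContDiff ℝ (⊤ : ℕ∞) (fun y : Pt => u y i) := fun i => contDiff_pi.1 hu i
  have hdU : ∀ i : Fin 3, Differentiable ℝ (fun y : Pt => u y i) :=
    fun i => (hui i).differentiable (by simp)
  have hdD : ∀ (v : Pt) (i : Fin 3), Differentiable ℝ (Dd v (fun y : Pt => u y i)) :=
    fun v i => (Dd_contDiff (hui i) v).differentiable (by simp)
  have hdρ : Differentiable ℝ ρ := hρ.differentiable (by simp)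
  have hdDρ : ∀ v : Pt, Differentiable ℝ (Dd v ρ) :=
    fun v => (Dd_contDiff hρ v).differentiable (by simp)
  have hdp : ContDiff ℝ (⊤ : ℕ∞) (deriv pbar) := by
    have h1 : ContDiff ℝ (⊤ : ℕ∞) (fderiv ℝ pbar) := hp.fderiv_right (by simp)
    exact (ContinuousLinearMap.apply ℝ ℝ 1).contDiff.comp h1
  -- the function c = ρ⁻¹ · p'(ρ)
  obtain ⟨c, hcdef⟩ : ∃ c : Pt → ℝ, ∀ y, c y = (ρ y)⁻¹ * deriv pbar (ρ y) :=
    ⟨_, fun _ => rfl⟩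
  have hceq : c = fun y => (ρ y)⁻¹ * deriv pbar (ρ y) := funext hcdef
  have hcs : ContDiff ℝ (⊤ : ℕ∞) c := by
    rw [hceq]
    exact (hρ.inv (fun y => (hρpos y).ne')).mul (hdp.comp hρ)
  have hdc : Differentiable ℝ c := hcs.differentiable (by simp)
  -- FTC: derivative of g
  have hFTC : ∀ y : Pt, HasFDerivAt g ((c y) • fderiv ℝ ρ y) y := by
    intro y
    rw [hgdef, hcdef]
    have hcont : ∀ t : ℝ, 0 < t → ContinuousAt (fun η : ℝ => η⁻¹ * deriv pbar η) t :=
      fun t ht => (continuousAt_inv₀ (ne_of_gt ht)).mul (hdp.continuous.continuousAt)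
    have hq : HasDerivAt (fun s => ∫ η in r₀..s, η⁻¹ * deriv pbar η)
        ((ρ y)⁻¹ * deriv pbar (ρ y)) (ρ y) := by
      apply intervalIntegral.integral_hasDerivAt_right
      · apply ContinuousOn.intervalIntegrable
        intro t ht
        have ht0 : 0 < t := lt_of_lt_of_le (lt_min hr₀ (hρpos y)) ht.1
        exact (hcont t ht0).continuousWithinAt
      · exact ⟨Set.univ, Filter.univ_mem,
          ((measurable_inv.mul (hdp.continuous.measurable)).aestronglyMeasurable)⟩
      · exact hcont _ (hρpos y)
    exact hq.comp_hasFDerivAt y (hdρ y).hasFDerivAt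
  have hdg : Differentiable ℝ g := fun y => (hFTC y).differentiableAt
  have hDg : ∀ (v y : Pt), Dd v g y = c y * Dd v ρ y := by
    intro v y
    rw [Dd, (hFTC y).fderiv]
    simp [Dd]
  -- momentum equation, componentwise, divided by ρ
  have M : ∀ (i : Fin 3) (y : Pt),
      Dd vt (fun z => u z i) y
        = -(c y * Dd (vs i) ρ y)
          - (u y 0 * Dd (vs 0) (fun z => u z i) y + u y 1 * Dd (vs 1) (fun z => u z i) y
              + u y 2 * Dd (vs 2) (fun z => u z i) y) := by
    intro i y
    rw [hcdef]
    have h := congrFun (hmom y) i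
    simp only [tderV, adv, sgrad, dot3, tder_eq, pder_eq, Fin.sum_univ_three, Pi.add_apply,
      Pi.neg_apply, Pi.smul_apply, smul_eq_mul] at h
    have hpress : Dd (vs i) (fun z => pbar (ρ z)) y = deriv pbar (ρ y) * Dd (vs i) ρ y :=
      Dd_comp1 ((hp.differentiable (by simp)).differentiableAt.hasDerivAt) (hdρ y)
    rw [hpress] at h
    have hρy := (hρpos y).ne'
    field_simp at h ⊢
    linarith [h]
  -- spatial derivative of the momentum equation (using symmetry of second derivatives)
  have hCM : ∀ i j : Fin 3,
      Dd vt (Dd (vs j) (fun z => u z i)) x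
        = Dd (vs j) (fun y => -(c y * Dd (vs i) ρ y)
            - (u y 0 * Dd (vs 0) (fun z => u z i) y + u y 1 * Dd (vs 1) (fun z => u z i) y
                + u y 2 * Dd (vs 2) (fun z => u z i) y)) x := by
    intro i j
    rw [Dd_comm (hui i) vt (vs j) x]
    exact congrArg (fun f => Dd (vs j) f x) (funext (M i))
  have hMx : ∀ i : Fin 3, Dd vt (fun z => u z i) x
      = -(c x * Dd (vs i) ρ x)
        - (u x 0 * Dd (vs 0) (fun z => u z i) x + u x 1 * Dd (vs 1) (fun z => u z i) x
            + u x 2 * Dd (vs 2) (fun z => u z i) x) := fun i => M i x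
  -- derivative of c
  have hq2 : DifferentiableAt ℝ (fun r : ℝ => r⁻¹ * deriv pbar r) (ρ x) :=
    (differentiableAt_inv (hρpos x).ne').mul ((hdp.differentiable (by simp)) _)
  have hDcx : ∀ v : Pt, Dd v c x
      = deriv (fun r : ℝ => r⁻¹ * deriv pbar r) (ρ x) * Dd v ρ x := by
    intro v
    rw [show c = fun y => (fun r : ℝ => r⁻¹ * deriv pbar r) (ρ y) from hceq]
    exact Dd_comp1 hq2.hasDerivAt (hdρ x)
  -- symmetry of second spatial derivatives
  have s10 : ∀ i : Fin 3, Dd (vs 1) (Dd (vs 0) (fun z => u z i)) x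
      = Dd (vs 0) (Dd (vs 1) (fun z => u z i)) x := fun i => Dd_comm (hui i) _ _ x
  have s20 : ∀ i : Fin 3, Dd (vs 2) (Dd (vs 0) (fun z => u z i)) x
      = Dd (vs 0) (Dd (vs 2) (fun z => u z i)) x := fun i => Dd_comm (hui i) _ _ x
  have s21 : ∀ i : Fin 3, Dd (vs 2) (Dd (vs 1) (fun z => u z i)) x
      = Dd (vs 1) (Dd (vs 2) (fun z => u z i)) x := fun i => Dd_comm (hui i) _ _ x
  have r10 : Dd (vs 1) (Dd (vs 0) ρ) x = Dd (vs 0) (Dd (vs 1) ρ) x := Dd_comm hρ _ _ x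
  have r20 : Dd (vs 2) (Dd (vs 0) ρ) x = Dd (vs 0) (Dd (vs 2) ρ) x := Dd_comm hρ _ _ x
  have r21 : Dd (vs 2) (Dd (vs 1) ρ) x = Dd (vs 1) (Dd (vs 2) ρ) x := Dd_comm hρ _ _ x
  -- normalize and expand the goal
  simp only [hgy, tder_eq, pder_eq, sdiv, scurl, dot3, Fin.sum_univ_three, Pi.add_apply,
    Pi.smul_apply, smul_eq_mul, Matrix.cons_val_zero, Matrix.cons_val_one, Matrix.head_cons,
    Matrix.cons_val_two, Matrix.tail_cons]
  simp (disch := fun_prop) only [Dd_fun_add, Dd_fun_sub, Dd_fun_mul, Dd_fun_neg,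
    Dd_fun_const_mul, Dd_fun_const]
  simp only [hMx, hCM]
  simp (disch := fun_prop) only [Dd_fun_add, Dd_fun_sub, Dd_fun_mul, Dd_fun_neg,
    Dd_fun_const_mul, Dd_fun_const]
  simp only [hDg, hDcx, s10, s20, s21, r10, r20, r21]
  ring
end
end

section
/- Let u : ℝ × ℝ³ → ℝ³, ρ, P : ℝ × ℝ³ → ℝ be smooth with ρ > 0 everywhere, satisfying the compressible Euler equations ρ(∂ₜu + (u·∇)u) = −∇P and ∂ₜρ + u·∇ρ + ρ div u = 0. Then the potential vorticity q = ω·∇ρ, with ω = curl u, satisfies the pointwise equation ∂ₜq + div(q u) + div( ρ (div u) ω ) = 0. -/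
open MeasureTheory

noncomputable section

/-! ### Auxiliary lemmas -/

section Aux

variable {f g : Pt → ℝ} {x : Pt}

theorem Dcomm (hf : ContDiff ℝ (⊤ : ℕ∞) f) (x v w : Pt) :
    fderiv ℝ (fun y => fderiv ℝ f y w) x v = fderiv ℝ (fun y => fderiv ℝ f y v) x w := by
  have hd : DifferentiableAt ℝ (fderiv ℝ f) x :=
    ((hf.fderiv_right (m := 1) (WithTop.coe_le_coe.mpr le_top)).differentiable (by simp)) x
  have key : ∀ z m : Pt, fderiv ℝ (fun y => fderiv ℝ f y z) x m = fderiv ℝ (fderiv ℝ f) x m z := by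
    intro z m
    rw [fderiv_clm_apply hd (differentiableAt_const z)]
    simp
  rw [key w v, key v w]
  exact (hf.contDiffAt.isSymmSndFDerivAt (by simp; exact WithTop.coe_le_coe.mpr le_top)) v w

@[fun_prop] theorem contDiff_pder (i : Fin 3) (hf : ContDiff ℝ (⊤ : ℕ∞) f) :
    ContDiff ℝ (⊤ : ℕ∞) (pder i f) :=
  (hf.fderiv_right (by simp)).clm_apply contDiff_const

@[fun_prop] theorem contDiff_tder (hf : ContDiff ℝ (⊤ : ℕ∞) f) :
    ContDiff ℝ (⊤ : ℕ∞) (tder f) :=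
  (hf.fderiv_right (by simp)).clm_apply contDiff_const

@[fun_prop] theorem differentiable_pder (i : Fin 3) (hf : ContDiff ℝ (⊤ : ℕ∞) f) :
    Differentiable ℝ (pder i f) := (contDiff_pder i hf).differentiable (by simp)

@[fun_prop] theorem differentiable_tder (hf : ContDiff ℝ (⊤ : ℕ∞) f) :
    Differentiable ℝ (tder f) := (contDiff_tder hf).differentiable (by simp)

theorem pder_add (i : Fin 3) (hf : DifferentiableAt ℝ f x) (hg : DifferentiableAt ℝ g x) :
    pder i (fun y => f y + g y) x = pder i f x + pder i g x := by
  unfold pder; rw [fderiv_fun_add hf hg]; rfl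

theorem pder_sub (i : Fin 3) (hf : DifferentiableAt ℝ f x) (hg : DifferentiableAt ℝ g x) :
    pder i (fun y => f y - g y) x = pder i f x - pder i g x := by
  unfold pder; rw [fderiv_fun_sub hf hg]; rfl

theorem pder_mul (i : Fin 3) (hf : DifferentiableAt ℝ f x) (hg : DifferentiableAt ℝ g x) :
    pder i (fun y => f y * g y) x = f x * pder i g x + g x * pder i f x := by
  unfold pder; rw [fderiv_fun_mul hf hg]; simp

theorem tder_add (hf : DifferentiableAt ℝ f x) (hg : DifferentiableAt ℝ g x) :
    tder (fun y => f y + g y) x = tder f x + tder g x := by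
  unfold tder; rw [fderiv_fun_add hf hg]; rfl

theorem tder_sub (hf : DifferentiableAt ℝ f x) (hg : DifferentiableAt ℝ g x) :
    tder (fun y => f y - g y) x = tder f x - tder g x := by
  unfold tder; rw [fderiv_fun_sub hf hg]; rfl

theorem tder_mul (hf : DifferentiableAt ℝ f x) (hg : DifferentiableAt ℝ g x) :
    tder (fun y => f y * g y) x = f x * tder g x + g x * tder f x := by
  unfold tder; rw [fderiv_fun_mul hf hg]; simp

theorem pder_tder (j : Fin 3) (hf : ContDiff ℝ (⊤ : ℕ∞) f) :
    pder j (tder f) x = tder (pder j f) x :=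
  Dcomm hf x (0, Pi.single j 1) (1, 0)

theorem pder_pder (j k : Fin 3) (hf : ContDiff ℝ (⊤ : ℕ∞) f) :
    pder j (pder k f) x = pder k (pder j f) x :=
  Dcomm hf x (0, Pi.single j 1) (0, Pi.single k 1)

theorem pder_zero_fn (j : Fin 3) : pder j (fun _ => (0 : ℝ)) x = 0 := by
  unfold pder; simp

end Aux

/-- for the compressible Euler equations the potential vorticity
`q = ω·∇ρ` satisfies `∂ₜq + div(q u) + div(ρ (div u) ω) = 0`. -/
theorem potential_vorticity_equation_compressible
    (u : Pt → Space) (ρ P : Pt → ℝ)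
    (hu : ContDiff ℝ (⊤ : ℕ∞) u) (hρ : ContDiff ℝ (⊤ : ℕ∞) ρ) (hP : ContDiff ℝ (⊤ : ℕ∞) P)
    (hρpos : ∀ x : Pt, 0 < ρ x)
    (hmom : ∀ x : Pt, ρ x • (tderV u x + adv u u x) = -sgrad P x)
    (hmass : ∀ x : Pt, tder ρ x + dot3 (u x) (sgrad ρ x) + ρ x * sdiv u x = 0)
    (x : Pt) :
    tder (fun y => dot3 (scurl u y) (sgrad ρ y)) x
      + sdiv (fun y => dot3 (scurl u y) (sgrad ρ y) • u y) x
      + sdiv (fun y => (ρ y * sdiv u y) • scurl u y) x = 0 := by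
  have hud : Differentiable ℝ u := hu.differentiable (by simp)
  have hρd : Differentiable ℝ ρ := hρ.differentiable (by simp)
  have hPd : Differentiable ℝ P := hP.differentiable (by simp)
  have hne : ρ x ≠ 0 := (hρpos x).ne'
  -- mass equation as a function identity
  have hM : (fun y => tder ρ y + (u y 0 * pder 0 ρ y + u y 1 * pder 1 ρ y + u y 2 * pder 2 ρ y)
      + ρ y * (pder 0 (fun z => u z 0) y + pder 1 (fun z => u z 1) y + pder 2 (fun z => u z 2) y))
      = (fun _ => (0 : ℝ)) := by
    funext y
    have h := hmass y
    simp only [dot3, sgrad, sdiv, Fin.sum_univ_three] at h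
    linear_combination h
  -- momentum equation (component i) as a function identity
  have hN : ∀ i : Fin 3, (fun y => ρ y * (tder (fun z => u z i) y
      + (u y 0 * pder 0 (fun z => u z i) y + u y 1 * pder 1 (fun z => u z i) y
        + u y 2 * pder 2 (fun z => u z i) y)) + pder i P y) = (fun _ => (0 : ℝ)) := by
    intro i
    funext y
    have h := congrFun (hmom y) i
    simp only [tderV, adv, dot3, sgrad, Fin.sum_univ_three, Pi.smul_apply, Pi.add_apply,
      Pi.neg_apply, smul_eq_mul] at h
    linear_combination h
  -- differentiated mass equation
  have hMd : ∀ j : Fin 3, pder j (fun y => tder ρ y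
      + (u y 0 * pder 0 ρ y + u y 1 * pder 1 ρ y + u y 2 * pder 2 ρ y)
      + ρ y * (pder 0 (fun z => u z 0) y + pder 1 (fun z => u z 1) y + pder 2 (fun z => u z 2) y)) x
      = 0 := by
    intro j; rw [hM]; exact pder_zero_fn j
  -- differentiated momentum equations
  have hNd : ∀ i j : Fin 3, pder j (fun y => ρ y * (tder (fun z => u z i) y
      + (u y 0 * pder 0 (fun z => u z i) y + u y 1 * pder 1 (fun z => u z i) y
        + u y 2 * pder 2 (fun z => u z i) y)) + pder i P y) x = 0 := by
    intro i j; rw [hN i]; exact pder_zero_fn j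
  simp (disch := fun_prop) only [pder_add, pder_sub, pder_mul, tder_add, tder_sub, tder_mul,
    pder_tder] at hMd hNd
  -- expand the goal
  simp only [sdiv, dot3, scurl, sgrad, Fin.sum_univ_three, Matrix.cons_val_zero,
    Matrix.cons_val_one, Matrix.cons_val_two, Matrix.head_cons, Matrix.tail_cons,
    Pi.smul_apply, smul_eq_mul]
  simp (disch := fun_prop) only [pder_add, pder_sub, pder_mul, tder_add, tder_sub, tder_mul,
    pder_tder]
  -- canonicalize second derivatives
  have hu0 : ContDiff ℝ (⊤ : ℕ∞) (fun z => u z 0) := by fun_prop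
  have hu1 : ContDiff ℝ (⊤ : ℕ∞) (fun z => u z 1) := by fun_prop
  have hu2 : ContDiff ℝ (⊤ : ℕ∞) (fun z => u z 2) := by fun_prop
  have hM0 := hMd 0; have hM1 := hMd 1; have hM2 := hMd 2
  have hN01 := hNd 0 1; have hN02 := hNd 0 2; have hN10 := hNd 1 0
  have hN12 := hNd 1 2; have hN20 := hNd 2 0; have hN21 := hNd 2 1
  simp only [pder_pder 1 0 hu0, pder_pder 2 0 hu0, pder_pder 2 1 hu0,
    pder_pder 1 0 hu1, pder_pder 2 0 hu1, pder_pder 2 1 hu1,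
    pder_pder 1 0 hu2, pder_pder 2 0 hu2, pder_pder 2 1 hu2,
    pder_pder 1 0 hρ, pder_pder 2 0 hρ, pder_pder 2 1 hρ,
    pder_pder 1 0 hP, pder_pder 2 0 hP, pder_pder 2 1 hP] at hM0 hM1 hM2 hN01 hN02 hN10 hN12 hN20 hN21 ⊢
  apply mul_left_cancel₀ hne
  rw [mul_zero]
  linear_combination
    (ρ x * (pder 1 (fun z => u z 2) x - pder 2 (fun z => u z 1) x)) * hM0
    + (ρ x * (pder 2 (fun z => u z 0) x - pder 0 (fun z => u z 2) x)) * hM1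
    + (ρ x * (pder 0 (fun z => u z 1) x - pder 1 (fun z => u z 0) x)) * hM2
    + pder 0 ρ x * hN21 - pder 0 ρ x * hN12
    + pder 1 ρ x * hN02 - pder 1 ρ x * hN20
    + pder 2 ρ x * hN10 - pder 2 ρ x * hN01
end
end
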